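/- arXiv:1703.09030 — 8 statements merged into one kernel-verified Lean document; each statement's English description precedes it below -/
import Mathlib

section
/- For n > 1 and any uniform global transition rule Φ, leader election from a shift-symmetric configuration is impossible: if s is shift-symmetric with respect to some non-zero v ∈ Z_n × Z_n, then no iterate Φ^i(s) can be a configuration having exactly one cell in a distinguished state a ∈ Σ. -/
theorem stmt_7 (n : ℕ) (hn : 1 < n) (A : Type) [Fintype A] (a : A) (m : ℕ)
    (offsets : Fin m → ZMod n × ZMod n) (phi : (Fin m → A) → A)
    (Phi : (ZMod n × ZMod n → A) → (ZMod n × ZMod n → A))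
    (hPhi : ∀ s w, Phi s w = phi (fun j => s (w + offsets j)))
    (s : ZMod n × ZMod n → A) (v : ZMod n × ZMod n) (hv : v ≠ 0)
    (hs : ∀ u, s u = s (u + v)) :
    ∀ i : ℕ, ¬ (∃! w : ZMod n × ZMod n, Phi^[i] s w = a) := by
  have key : ∀ i u, Phi^[i] s u = Phi^[i] s (u + v) := by
    intro i
    induction i with
    | zero => simpa using hs
    | succ k ih =>
      intro u
      simp only [Function.iterate_succ_apply']
      rw [hPhi, hPhi]
      congr 1
      funext j
      rw [ih (u + offsets j)]
      ring_nf
  rintro i ⟨w, hw, huniq⟩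
  have h2 : w + v = w := huniq (w + v) ((key i w).symm.trans hw)
  exact hv (by simpa using h2)
end

section
/- For any u, v ∈ Z_n × Z_n and finite alphabet Σ with |Σ| ≥ 1, the set of configurations shift-symmetric w.r.t. u is contained in the set of configurations shift-symmetric w.r.t. v if and only if ⟨v⟩ is a subgroup of ⟨u⟩. -/
open AddSubgroup Function

theorem Function.Periodic.of_mem_zmultiples {G α : Type*} [AddGroup G] {f : G → α} {u v : G}
    (hf : Periodic f u) (hv : v ∈ zmultiples u) : Periodic f v := by
  obtain ⟨k, rfl⟩ := hv
  exact hf.zsmul k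

theorem AddSubgroup.periodic_ite_mem {G α : Type*} [AddGroup G] (H : AddSubgroup G)
    [DecidablePred (· ∈ H)] {u : G} (hu : u ∈ H) (a b : α) :
    Periodic (fun x => if x ∈ H then a else b) u := fun x => by
  simp only [add_mem_cancel_right hu]

theorem AddSubgroup.mem_of_periodic_ite_mem {G α : Type*} [AddGroup G] (H : AddSubgroup G)
    [DecidablePred (· ∈ H)] {v : G} {a b : α} (hab : a ≠ b)
    (hv : Periodic (fun x => if x ∈ H then a else b) v) : v ∈ H := by
  by_contra hvH
  have h0 := hv 0
  simp only [zero_add, hvH, H.zero_mem, if_true, if_false] at h0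
  exact hab h0.symm

theorem forall_periodic_imp_iff_mem_zmultiples {G α : Type*} [AddGroup G] [Nontrivial α]
    (u v : G) : (∀ f : G → α, Periodic f u → Periodic f v) ↔ v ∈ zmultiples u := by
  classical
  refine ⟨fun h => ?_, fun hv f hf => hf.of_mem_zmultiples hv⟩
  obtain ⟨a, b, hab⟩ := exists_pair_ne α
  exact (zmultiples u).mem_of_periodic_ite_mem hab
    (h _ ((zmultiples u).periodic_ite_mem (mem_zmultiples u) a b))

theorem stmt_11_general (n : ℕ) (A : Type) [Fintype A] (hA : 2 ≤ Fintype.card A)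
    (u v : ZMod n × ZMod n) :
    {s : ZMod n × ZMod n → A | ∀ x, s x = s (x + u)} ⊆
        {s : ZMod n × ZMod n → A | ∀ x, s x = s (x + v)} ↔
      AddSubgroup.zmultiples v ≤ AddSubgroup.zmultiples u := by
  have : Nontrivial A := Fintype.one_lt_card_iff_nontrivial.mp hA
  rw [zmultiples_le, ← forall_periodic_imp_iff_mem_zmultiples (α := A)]
  simp only [Set.subset_def, Set.mem_ofPred_eq, Periodic, eq_comm]

theorem stmt_11 (n : ℕ) (hn : 1 ≤ n) (A : Type) [Fintype A] (hA : 2 ≤ Fintype.card A)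
    (u v : ZMod n × ZMod n) :
    {s : ZMod n × ZMod n → A | ∀ x, s x = s (x + u)} ⊆
        {s : ZMod n × ZMod n → A | ∀ x, s x = s (x + v)} ↔
      AddSubgroup.zmultiples v ≤ AddSubgroup.zmultiples u :=
  stmt_11_general n A hA u v
end

section
/- Let p be a prime divisor of n, let n̂ = n/p, and let G_n(p) = {(0, n̂)} ∪ {(n̂, i·n̂) : 0 ≤ i ≤ p−1} ⊆ Z_n × Z_n. Then for any two distinct u, v ∈ G_n(p), the intersection ⟨u⟩ ∩ ⟨v⟩ is trivial (has order 1). -/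
/-- The set of generators `G_n(p)` from the paper. -/
def Gnp (n p : ℕ) : Set (ZMod n × ZMod n) :=
  insert ((0 : ZMod n), ((n / p : ℕ) : ZMod n))
    {w | ∃ i < p, w = (((n / p : ℕ) : ZMod n), ((i * (n / p) : ℕ) : ZMod n))}

/-- `E n p k = k * (n/p)` in `ZMod n`. -/
def E (n p : ℕ) (k : ℤ) : ZMod n := ((k * (n / p : ℕ) : ℤ) : ZMod n)

lemma key_zero (n p : ℕ) (hn : 0 < n) (hp : p.Prime) (hpn : p ∣ n) (k : ℤ) :
    E n p k = 0 ↔ (p : ℤ) ∣ k := by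
  rw [E, ZMod.intCast_zmod_eq_zero_iff_dvd]
  obtain ⟨m, rfl⟩ := hpn
  have hm : 0 < m := Nat.pos_of_ne_zero (by rintro rfl; simp at hn)
  rw [Nat.mul_div_cancel_left m hp.pos]
  push_cast
  rw [mul_comm (p : ℤ) (m : ℤ), mul_comm k (m : ℤ)]
  exact mul_dvd_mul_iff_left (by exact_mod_cast hm.ne')

lemma key_eq (n p : ℕ) (hn : 0 < n) (hp : p.Prime) (hpn : p ∣ n) (k l : ℤ) :
    E n p k = E n p l ↔ (p : ℤ) ∣ k - l := by
  rw [← key_zero n p hn hp hpn, ← sub_eq_zero (a := E n p k)]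
  constructor <;> intro h <;> [rw [← h]; rw [← h]] <;> simp [E] <;> ring

lemma smul_E1 (n p : ℕ) (k : ℤ) :
    k • (((n / p : ℕ) : ZMod n)) = E n p k := by
  rw [E, Int.cast_mul, Int.cast_natCast, zsmul_eq_mul]

lemma smul_E2 (n p : ℕ) (k : ℤ) (c : ℕ) :
    k • (((c * (n / p) : ℕ)) : ZMod n) = E n p (k * c) := by
  rw [E, zsmul_eq_mul, Nat.cast_mul, Int.cast_mul, Int.cast_mul, Int.cast_natCast,
    Int.cast_natCast, mul_assoc]

lemma cast_E (n p : ℕ) (c : ℕ) :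
    (((c * (n / p) : ℕ)) : ZMod n) = E n p c := by
  rw [E, Int.cast_mul, Int.cast_natCast, Int.cast_natCast, Nat.cast_mul]

theorem stmt_13 (n p : ℕ) (hn : 0 < n) (hp : p.Prime) (hpn : p ∣ n)
    (u v : ZMod n × ZMod n) (hu : u ∈ Gnp n p) (hv : v ∈ Gnp n p) (huv : u ≠ v) :
    Nat.card (AddSubgroup.zmultiples u ⊓ AddSubgroup.zmultiples v :
      AddSubgroup (ZMod n × ZMod n)) = 1 := by
  have key := key_zero n p hn hp hpn
  have keyE := key_eq n p hn hp hpn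
  have hbot : (AddSubgroup.zmultiples u ⊓ AddSubgroup.zmultiples v) = ⊥ := by
    rw [eq_bot_iff]
    intro x hx
    rw [AddSubgroup.mem_inf] at hx
    obtain ⟨hx1, hx2⟩ := hx
    rw [AddSubgroup.mem_zmultiples_iff] at hx1 hx2
    obtain ⟨a, ha⟩ := hx1
    obtain ⟨b, hb⟩ := hx2
    subst ha
    rw [AddSubgroup.mem_bot]
    simp only [Gnp, Set.mem_insert_iff, Set.mem_setOf_eq] at hu hv
    rcases hu with rfl | ⟨i, hi, rfl⟩ <;> rcases hv with rfl | ⟨j, hj, rfl⟩ <;>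
      simp only [Prod.smul_mk, Prod.ext_iff, smul_E1, smul_E2, smul_zero,
        Prod.fst_zero, Prod.snd_zero] at hb ⊢
    · exact absurd rfl huv
    · -- u = (0, m), v = (m, j*m)
      obtain ⟨hb1, hb2⟩ := hb
      have hpb : (p : ℤ) ∣ b := (key b).1 hb1
      refine ⟨by trivial, ?_⟩
      rw [← hb2]
      exact (key (b * j)).2 (hpb.mul_right j)
    · -- u = (m, i*m), v = (0, m)
      obtain ⟨hb1, hb2⟩ := hb
      have hpa : (p : ℤ) ∣ a := (key a).1 hb1.symm
      exact ⟨(key a).2 hpa, (key (a * i)).2 (hpa.mul_right i)⟩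
    · -- u = (m, i*m), v = (m, j*m)
      have hij : ¬ (p : ℤ) ∣ ((i : ℤ) - j) := by
        intro hd
        apply huv
        rw [Prod.ext_iff]
        refine ⟨rfl, ?_⟩
        rw [cast_E, cast_E]
        exact (keyE i j).2 hd
      obtain ⟨hb1, hb2⟩ := hb
      have hba : (p : ℤ) ∣ b - a := (keyE b a).1 hb1
      have hd : (p : ℤ) ∣ b * j - a * i := (keyE _ _).1 hb2
      have h4 : (p : ℤ) ∣ a * (j - i) := by
        have : a * ((j : ℤ) - i) = (b * j - a * i) - (b - a) * j := by ring
        rw [this]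
        exact dvd_sub hd (hba.mul_right j)
      have hpa : (p : ℤ) ∣ a := by
        rcases (Int.Prime.dvd_mul' hp h4) with h | h
        · exact h
        · exact absurd (by rw [← neg_sub (j : ℤ) i]; exact dvd_neg.mpr h) hij
      exact ⟨(key a).2 hpa, (key (a * i)).2 (hpa.mul_right i)⟩
  rw [hbot]
  simp
end

section
/- Let p be a prime divisor of n and n̂ = n/p. For any two distinct u, v in G_n(p) = {(0, n̂)} ∪ {(n̂, i·n̂) : 0 ≤ i ≤ p−1}, the subgroup ⟨u, v⟩ equals ⟨(n̂, 0), (0, n̂)⟩ and has order p². -/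
/-!
Write `k = n̂ ∈ ZMod n`, `x = (k, 0)` and `y = (0, k)`, so that `G_n(p)` consists of `y` and the
elements `x + i • y` with `0 ≤ i < p`, and `y` has order `p`. Adding a multiple of one generator
to the other, or multiplying one by an integer prime to its order, does not change the subgroup
generated by a pair. These moves turn `{y, x + i • y}` into `{x, y}` at once, and
`{x + i • y, x + j • y}` after replacing one element by the difference `(j - i) • y`, where
`j - i` is prime to `p`. Finally `⟨x, y⟩ = ⟨k⟩ × ⟨k⟩` has order `p²`.
-/

namespace AddSubgroup

variable {G : Type*} [AddCommGroup G]

theorem closure_pair_add_zsmul (x y : G) (m : ℤ) : closure {x + m • y, y} = closure {x, y} := by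
  apply le_antisymm <;> rw [closure_le, Set.insert_subset_iff, Set.singleton_subset_iff] <;>
    refine ⟨?_, subset_closure (by simp)⟩ <;> rw [SetLike.mem_coe, mem_closure_pair]
  · exact ⟨1, m, by simp⟩
  · exact ⟨1, -m, by simp⟩

theorem closure_pair_zsmul_of_gcd_eq_one (x y : G) {m : ℤ} (hm : m.gcd (addOrderOf y) = 1) :
    closure {x, m • y} = closure {x, y} := by
  have hy : y ∈ closure {x, m • y} :=
    zmultiples_le.2 (subset_closure (by simp)) (mem_zmultiples_zsmul_iff.2 hm)
  apply le_antisymm <;> rw [closure_le, Set.insert_subset_iff, Set.singleton_subset_iff] <;>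
    refine ⟨subset_closure (by simp), ?_⟩
  · exact zsmul_mem (subset_closure (by simp)) m
  · exact hy

theorem closure_pair_add_zsmul_add_zsmul (x y : G) {i j : ℤ}
    (hij : (j - i).gcd (addOrderOf y) = 1) :
    closure {x + i • y, x + j • y} = closure {x, y} := by
  have hj : x + j • y = (j - i) • y + (1 : ℤ) • (x + i • y) := by module
  rw [Set.pair_comm, hj, closure_pair_add_zsmul, Set.pair_comm,
    closure_pair_zsmul_of_gcd_eq_one _ _ hij, closure_pair_add_zsmul]

theorem closure_pair_inl_inr {H : Type*} [AddCommGroup H] (a : G) (b : H) :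
    closure {((a, 0) : G × H), (0, b)} = (zmultiples a).prod (zmultiples b) := by
  apply le_antisymm
  · rw [closure_le, Set.insert_subset_iff, Set.singleton_subset_iff]
    exact ⟨⟨mem_zmultiples a, zero_mem _⟩, ⟨zero_mem _, mem_zmultiples b⟩⟩
  · rintro ⟨_, _⟩ ⟨⟨m, rfl⟩, ⟨l, rfl⟩⟩
    exact mem_closure_pair.2 ⟨m, l, by simp⟩

theorem card_closure_pair_inl_inr {H : Type*} [AddCommGroup H] (a : G) (b : H) :
    Nat.card (closure {((a, 0) : G × H), (0, b)}) = addOrderOf a * addOrderOf b := by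
  rw [closure_pair_inl_inr, Nat.card_congr (prodEquiv _ _).toEquiv, Nat.card_prod,
    Nat.card_zmultiples, Nat.card_zmultiples]

end AddSubgroup

theorem ZMod.addOrderOf_natCast_div {n d : ℕ} (hn : n ≠ 0) (hd : d ∣ n) :
    addOrderOf ((n / d : ℕ) : ZMod n) = d := by
  rw [ZMod.addOrderOf_coe _ hn, Nat.gcd_eq_right (Nat.div_dvd_of_dvd hd), Nat.div_div_self hd hn]

theorem Int.gcd_natCast_sub_natCast_of_lt_prime {p i j : ℕ} (hp : p.Prime) (hi : i < p)
    (hj : j < p) (hij : i ≠ j) : ((j : ℤ) - i).gcd p = 1 :=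
  (Nat.coprime_of_lt_prime (by omega) (by omega) hp).symm

theorem mem_Gnp_iff {n p : ℕ} {u : ZMod n × ZMod n} :
    u ∈ Gnp n p ↔ u = (0, ((n / p : ℕ) : ZMod n)) ∨
      ∃ i < p, u = (((n / p : ℕ) : ZMod n), 0) + (i : ℤ) • (0, ((n / p : ℕ) : ZMod n)) := by
  simp [Gnp]

theorem stmt_15 (n p : ℕ) (hn : 0 < n) (hp : p.Prime) (hpn : p ∣ n)
    (u v : ZMod n × ZMod n) (hu : u ∈ Gnp n p) (hv : v ∈ Gnp n p) (huv : u ≠ v) :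
    AddSubgroup.closure {u, v} =
      AddSubgroup.closure {(((n / p : ℕ) : ZMod n), (0 : ZMod n)),
        ((0 : ZMod n), ((n / p : ℕ) : ZMod n))} ∧
    Nat.card (AddSubgroup.closure {u, v} : AddSubgroup (ZMod n × ZMod n)) = p ^ 2 := by
  have hord : addOrderOf ((n / p : ℕ) : ZMod n) = p := ZMod.addOrderOf_natCast_div hn.ne' hpn
  have hordy : addOrderOf ((0, ((n / p : ℕ) : ZMod n)) : ZMod n × ZMod n) = p := by
    simp [Prod.addOrderOf_mk, hord]
  have hclosure : AddSubgroup.closure {u, v} =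
      AddSubgroup.closure {(((n / p : ℕ) : ZMod n), 0), (0, ((n / p : ℕ) : ZMod n))} := by
    rcases mem_Gnp_iff.1 hu with rfl | ⟨i, hi, rfl⟩ <;>
      rcases mem_Gnp_iff.1 hv with rfl | ⟨j, hj, rfl⟩
    · exact absurd rfl huv
    · rw [Set.pair_comm, AddSubgroup.closure_pair_add_zsmul, Set.pair_comm]
    · rw [AddSubgroup.closure_pair_add_zsmul]
    · refine AddSubgroup.closure_pair_add_zsmul_add_zsmul _ _ ?_
      rw [hordy]
      exact Int.gcd_natCast_sub_natCast_of_lt_prime hp hi hj (by rintro rfl; exact huv rfl)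
  refine ⟨hclosure, ?_⟩
  rw [hclosure, AddSubgroup.card_closure_pair_inl_inr, hord, sq]
end

section
/- A configuration s : Z_n × Z_n → Σ is shift-symmetric with respect to some non-zero vector if and only if it is shift-symmetric with respect to some vector w ∈ G_n, where G_n = ⋃_{p prime, p | n} G_n(p) and G_n(p) = {(0, n/p)} ∪ {(n/p, i·n/p) : 0 ≤ i ≤ p−1}. -/
/-- The set of generators `G_n = ⋃_{p prime, p ∣ n} G_n(p)`. -/
def Gn (n : ℕ) : Set (ZMod n × ZMod n) :=
  {w | ∃ p : ℕ, p.Prime ∧ p ∣ n ∧ w ∈ Gnp n p}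

/-! Periods of `s` are closed under multiples, and every nonzero period has a multiple of
prime order `p`, which divides `n`. The `p`-torsion of `ZMod n × ZMod n` is
`(n / p) • (ZMod p)²`, a plane over the field `ZMod p`; scaling a nonzero vector by the inverse
of its first nonzero coordinate turns it into `(0, 1)` or `(1, i)`, i.e. an element of `G_n(p)`.
Conversely the elements of `G_n` are nonzero. -/

lemma exists_nsmul_addOrderOf_prime {G : Type*} [AddMonoid G] {x : G} (hx : x ≠ 0)
    (hfin : IsOfFinAddOrder x) : ∃ k : ℕ, (addOrderOf (k • x)).Prime := by
  set m := addOrderOf x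
  have hm0 : m ≠ 0 := hfin.addOrderOf_pos.ne'
  have hm1 : m ≠ 1 := mt AddMonoid.addOrderOf_eq_one_iff.mp hx
  have hpm : m.minFac ∣ m := m.minFac_dvd
  refine ⟨m / m.minFac, ?_⟩
  have hk0 : m / m.minFac ≠ 0 :=
    (Nat.div_ne_zero_iff_of_dvd hpm).mpr ⟨hm0, (Nat.minFac_pos m).ne'⟩
  rw [addOrderOf_nsmul_of_dvd hk0 (Nat.div_dvd_of_dvd hpm), Nat.div_div_self hpm hm0]
  exact Nat.minFac_prime hm1

/-- `c ↦ (n / p) • c`, identifying `ZMod p` with the `p`-torsion of `ZMod n` when `p ∣ n`. -/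
def torsionEmb (n p : ℕ) (c : ZMod p) : ZMod n :=
  ((n / p * c.val : ℕ) : ZMod n)

section torsionEmb

variable {n p : ℕ}

lemma natCast_div_mul_mod (hpn : p ∣ n) (z : ℕ) :
    ((n / p * (z % p) : ℕ) : ZMod n) = ((n / p * z : ℕ) : ZMod n) := by
  conv_rhs => rw [← Nat.mod_add_div z p]
  rw [mul_add, ← mul_assoc, Nat.div_mul_cancel hpn]
  simp

lemma torsionEmb_nsmul (hpn : p ∣ n) (k : ℕ) (c : ZMod p) :
    k • torsionEmb n p c = torsionEmb n p (k • c) := by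
  rw [torsionEmb, torsionEmb, nsmul_eq_mul, nsmul_eq_mul, ZMod.val_mul, ZMod.val_natCast,
    Nat.mod_mul_mod, natCast_div_mul_mod hpn]
  push_cast
  ring

@[simp]
lemma torsionEmb_zero : torsionEmb n p 0 = 0 := by
  simp [torsionEmb]

lemma torsionEmb_one [Fact (1 < p)] : torsionEmb n p 1 = ((n / p : ℕ) : ZMod n) := by
  simp [torsionEmb, ZMod.val_one]

lemma torsionEmb_eq_zero_iff [NeZero n] (hpn : p ∣ n) {c : ZMod p} :
    torsionEmb n p c = 0 ↔ c = 0 := by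
  have hp : NeZero p := ⟨fun h => NeZero.ne n (Nat.eq_zero_of_zero_dvd (h ▸ hpn))⟩
  have hnp : 0 < n / p := Nat.div_pos (Nat.le_of_dvd (NeZero.pos n) hpn) (NeZero.pos p)
  calc torsionEmb n p c = 0 ↔ n / p * p ∣ n / p * c.val := by
        rw [Nat.div_mul_cancel hpn, torsionEmb, ZMod.natCast_eq_zero_iff]
    _ ↔ p ∣ c.val := Nat.mul_dvd_mul_iff_left hnp
    _ ↔ c = 0 := by rw [← ZMod.natCast_eq_zero_iff, ZMod.natCast_zmod_val]

lemma exists_torsionEmb_eq [NeZero n] (hpn : p ∣ n) {a : ZMod n} (ha : p • a = 0) :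
    ∃ c, torsionEmb n p c = a := by
  have hp : p ≠ 0 := fun h => NeZero.ne n (Nat.eq_zero_of_zero_dvd (h ▸ hpn))
  have hpa : n / p * p ∣ p * a.val := by
    rw [Nat.div_mul_cancel hpn, ← ZMod.natCast_eq_zero_iff]
    push_cast
    rw [ZMod.natCast_zmod_val, ← nsmul_eq_mul, ha]
  obtain ⟨x, hx⟩ : n / p ∣ a.val := by
    rw [mul_comm] at hpa
    exact (Nat.mul_dvd_mul_iff_left (Nat.pos_of_ne_zero hp)).mp hpa
  refine ⟨x, ?_⟩
  rw [torsionEmb, ZMod.val_natCast, natCast_div_mul_mod hpn, ← hx, ZMod.natCast_zmod_val]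

end torsionEmb

lemma ne_zero_of_mem_Gnp {n p : ℕ} [NeZero n] (hp : p.Prime) (hpn : p ∣ n)
    {w : ZMod n × ZMod n} (hw : w ∈ Gnp n p) : w ≠ 0 := by
  have : Fact (1 < p) := ⟨hp.one_lt⟩
  have hnp : ((n / p : ℕ) : ZMod n) ≠ 0 := by
    rw [← torsionEmb_one, Ne, torsionEmb_eq_zero_iff hpn]
    exact one_ne_zero
  rcases hw with rfl | ⟨i, -, rfl⟩
  · exact fun h => hnp (congrArg Prod.snd h)
  · exact fun h => hnp (congrArg Prod.fst h)

lemma exists_nsmul_mem_Gnp {n p : ℕ} [NeZero n] [Fact p.Prime] (hpn : p ∣ n)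
    {w : ZMod n × ZMod n} (hw : addOrderOf w = p) : ∃ k : ℕ, k • w ∈ Gnp n p := by
  have hw0 : w ≠ 0 := by
    rintro rfl
    exact (Fact.out : p.Prime).ne_one (by simpa using hw.symm)
  have hpw : p • w = 0 := hw ▸ addOrderOf_nsmul_eq_zero w
  obtain ⟨a, ha⟩ := exists_torsionEmb_eq hpn (congrArg Prod.fst hpw)
  obtain ⟨b, hb⟩ := exists_torsionEmb_eq hpn (congrArg Prod.snd hpw)
  have hab : w = (torsionEmb n p a, torsionEmb n p b) := Prod.ext ha.symm hb.symm
  have hsmul (k : ℕ) : k • w = (torsionEmb n p (k • a), torsionEmb n p (k • b)) := by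
    rw [hab, Prod.smul_mk, torsionEmb_nsmul hpn, torsionEmb_nsmul hpn]
  have hinv (c : ZMod p) (hc : c ≠ 0) : c⁻¹.val • c = 1 := by
    rw [nsmul_eq_mul, ZMod.natCast_zmod_val, inv_mul_cancel₀ hc]
  by_cases ha0 : a = 0
  · have hb0 : b ≠ 0 := by
      rintro rfl
      exact hw0 (by simp [hab, ha0])
    refine ⟨b⁻¹.val, Or.inl ?_⟩
    rw [hsmul, ha0, smul_zero, torsionEmb_zero, hinv b hb0, torsionEmb_one]
  · refine ⟨a⁻¹.val, Or.inr ⟨(a⁻¹ * b).val, ZMod.val_lt _, ?_⟩⟩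
    rw [hsmul, hinv a ha0, torsionEmb_one, nsmul_eq_mul, ZMod.natCast_zmod_val, torsionEmb,
      mul_comm (n / p)]

theorem stmt_16 (n : ℕ) (hn : 2 ≤ n) (A : Type) (s : ZMod n × ZMod n → A) :
    (∃ v : ZMod n × ZMod n, v ≠ 0 ∧ ∀ u, s u = s (u + v)) ↔
      (∃ w ∈ Gn n, ∀ u, s u = s (u + w)) := by
  have : NeZero n := ⟨by omega⟩
  constructor
  · rintro ⟨v, hv, hs⟩
    obtain ⟨k, hk⟩ := exists_nsmul_addOrderOf_prime hv (isOfFinAddOrder_of_finite v)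
    have : Fact (addOrderOf (k • v)).Prime := ⟨hk⟩
    have hpn : addOrderOf (k • v) ∣ n :=
      addOrderOf_dvd_of_nsmul_eq_zero (by ext <;> simp)
    obtain ⟨j, hj⟩ := exists_nsmul_mem_Gnp hpn rfl
    have hper : Function.Periodic s (j • k • v) :=
      (Function.Periodic.nsmul (fun u => (hs u).symm) k).nsmul j
    exact ⟨_, ⟨_, hk, hpn, hj⟩, fun u => (hper u).symm⟩
  · rintro ⟨w, ⟨p, hp, hpn, hw⟩, hs⟩
    exact ⟨w, ne_zero_of_mem_Gnp hp hpn hw, hs⟩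
end

section
/- For a prime n = p and alphabet Σ with |Σ| ≥ 2, the number of configurations s : Z_p × Z_p → Σ that are shift-symmetric with respect to at least one non-zero vector equals |Σ|^p·(p+1) − |Σ|·p. -/
open Finset

namespace Stmt17

variable {p : ℕ} [Fact p.Prime] {A : Type} [Fintype A]

/-- canonical generators of the p+1 lines through the origin -/
def gen (m : Option (ZMod p)) : ZMod p × ZMod p :=
  match m with
  | some a => (1, a)
  | none => (0, 1)

lemma gen_ne_zero (m : Option (ZMod p)) : gen m ≠ 0 := by
  cases m with
  | some a => intro h; exact one_ne_zero (congrArg Prod.fst h)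
  | none => intro h; exact one_ne_zero (congrArg Prod.snd h)

lemma inv_nsmul {s : ZMod p × ZMod p → A} {v : ZMod p × ZMod p}
    (h : ∀ u, s u = s (u + v)) (n : ℕ) : ∀ u, s u = s (u + n • v) := by
  induction n with
  | zero => simp
  | succ n ih =>
    intro u
    rw [h u, ih (u + v), succ_nsmul]
    ring_nf

lemma inv_smul {s : ZMod p × ZMod p → A} {v : ZMod p × ZMod p}
    (h : ∀ u, s u = s (u + v)) (k : ZMod p) : ∀ u, s u = s (u + k • v) := by
  intro u
  have := inv_nsmul h k.val u
  rwa [← Nat.cast_smul_eq_nsmul (ZMod p), ZMod.natCast_val, ZMod.cast_id] at this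

lemma exists_gen {s : ZMod p × ZMod p → A} {v : ZMod p × ZMod p} (hv : v ≠ 0)
    (h : ∀ u, s u = s (u + v)) : ∃ m, ∀ u, s u = s (u + gen m) := by
  by_cases h1 : v.1 = 0
  · have h2 : v.2 ≠ 0 := by
      intro h2; exact hv (Prod.ext h1 h2)
    refine ⟨none, ?_⟩
    have : gen (p := p) none = v.2⁻¹ • v := by
      simp only [gen, Prod.smul_def, Prod.ext_iff, smul_eq_mul]
      constructor
      · rw [h1]; ring
      · rw [inv_mul_cancel₀ h2]
    rw [this]
    exact inv_smul h v.2⁻¹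
  · refine ⟨some (v.2 * v.1⁻¹), ?_⟩
    have : gen (some (v.2 * v.1⁻¹)) = v.1⁻¹ • v := by
      simp only [gen, Prod.smul_def, Prod.ext_iff, smul_eq_mul]
      constructor
      · rw [inv_mul_cancel₀ h1]
      · ring
    rw [this]
    exact inv_smul h v.1⁻¹

lemma gen_span (m m' : Option (ZMod p)) (hmm : m ≠ m') (u : ZMod p × ZMod p) :
    ∃ α β : ZMod p, u = α • gen m + β • gen m' := by
  have key : ∀ a : ZMod p, ∀ w : ZMod p × ZMod p,
      ∃ α β : ZMod p, w = α • gen (some a) + β • gen none := by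
    intro a w
    refine ⟨w.1, w.2 - w.1 * a, ?_⟩
    simp only [gen, Prod.smul_def, Prod.ext_iff, smul_eq_mul, Prod.fst_add, Prod.snd_add]
    constructor <;> ring
  match m, m' with
  | some a, some b =>
    have hab : b - a ≠ 0 := by
      intro h; exact hmm (by rw [sub_eq_zero] at h; rw [h])
    refine ⟨u.1 - (u.2 - a * u.1) * (b - a)⁻¹, (u.2 - a * u.1) * (b - a)⁻¹, ?_⟩
    simp only [gen, Prod.smul_def, Prod.ext_iff, smul_eq_mul, Prod.fst_add, Prod.snd_add]
    constructor
    · ring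
    · field_simp
      ring
  | some a, none => exact key a u
  | none, some a =>
    obtain ⟨α, β, hw⟩ := key a u
    exact ⟨β, α, by rw [hw, add_comm]⟩
  | none, none => exact absurd rfl hmm

lemma const_of_two {s : ZMod p × ZMod p → A} {m m' : Option (ZMod p)} (hmm : m ≠ m')
    (h : ∀ u, s u = s (u + gen m)) (h' : ∀ u, s u = s (u + gen m')) :
    ∀ u, s u = s 0 := by
  intro u
  obtain ⟨α, β, hu⟩ := gen_span m m' hmm u
  calc s u = s (0 + α • gen m + β • gen m') := by rw [hu, zero_add]
    _ = s (0 + α • gen m) := (inv_smul h' β _).symm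
    _ = s 0 := (inv_smul h α 0).symm

/-- coset coordinates -/
def coordv (m : Option (ZMod p)) (u : ZMod p × ZMod p) : ZMod p :=
  match m with
  | some a => u.2 - a * u.1
  | none => u.1

def embv (m : Option (ZMod p)) (y : ZMod p) : ZMod p × ZMod p :=
  match m with
  | some _ => (0, y)
  | none => (y, 0)

lemma coordv_add_gen (m : Option (ZMod p)) (u : ZMod p × ZMod p) :
    coordv m (u + gen m) = coordv m u := by
  cases m with
  | some a => simp only [coordv, gen, Prod.snd_add, Prod.fst_add]; ring
  | none => simp [coordv, gen]

lemma coordv_embv (m : Option (ZMod p)) (y : ZMod p) : coordv m (embv m y) = y := by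
  cases m <;> simp [coordv, embv]

lemma apply_embv_coordv {s : ZMod p × ZMod p → A} {m : Option (ZMod p)}
    (h : ∀ u, s u = s (u + gen m)) (u : ZMod p × ZMod p) :
    s (embv m (coordv m u)) = s u := by
  cases m with
  | some a =>
    have := inv_smul h (-u.1) u
    rw [this]
    congr 1
    simp only [embv, coordv, gen, Prod.smul_def, smul_eq_mul, Prod.ext_iff,
      Prod.fst_add, Prod.snd_add]
    constructor <;> ring
  | none =>
    have := inv_smul h (-u.2) u
    rw [this]
    congr 1
    simp only [embv, coordv, gen, Prod.smul_def, smul_eq_mul, Prod.ext_iff,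
      Prod.fst_add, Prod.snd_add]
    constructor <;> ring

lemma card_T (m : Option (ZMod p)) :
    Nat.card {s : ZMod p × ZMod p → A // ∀ u, s u = s (u + gen m)} =
      Fintype.card A ^ p := by
  have e : {s : ZMod p × ZMod p → A // ∀ u, s u = s (u + gen m)} ≃ (ZMod p → A) :=
    { toFun := fun s => s.1 ∘ embv m
      invFun := fun f => ⟨f ∘ coordv m, fun u => by
        simp only [Function.comp_apply, coordv_add_gen]⟩
      left_inv := fun s => by
        ext u
        exact apply_embv_coordv s.2 u
      right_inv := fun f => by
        funext y
        simp [coordv_embv] }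
  rw [Nat.card_congr e, Nat.card_eq_fintype_card, Fintype.card_fun, ZMod.card]

lemma card_C :
    Nat.card {s : ZMod p × ZMod p → A // ∀ u, s u = s 0} = Fintype.card A := by
  have e : {s : ZMod p × ZMod p → A // ∀ u, s u = s 0} ≃ A :=
    { toFun := fun s => s.1 0
      invFun := fun a => ⟨fun _ => a, fun _ => rfl⟩
      left_inv := fun s => by
        ext u
        exact (s.2 u).symm
      right_inv := fun a => rfl }
  rw [Nat.card_congr e, Nat.card_eq_fintype_card]

end Stmt17

open Stmt17 Finset in
theorem stmt_17 (p : ℕ) (hp : p.Prime) (A : Type) [Fintype A] (hA : 2 ≤ Fintype.card A) :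
    Nat.card {s : ZMod p × ZMod p → A //
        ∃ v : ZMod p × ZMod p, v ≠ 0 ∧ ∀ u, s u = s (u + v)} =
      Fintype.card A ^ p * (p + 1) - Fintype.card A * p := by
  classical
  haveI : Fact p.Prime := ⟨hp⟩
  set X := Fintype.card A with hX
  -- Finsets
  set S : Finset (ZMod p × ZMod p → A) :=
    univ.filter (fun s => ∃ v : ZMod p × ZMod p, v ≠ 0 ∧ ∀ u, s u = s (u + v)) with hS
  set C : Finset (ZMod p × ZMod p → A) :=
    univ.filter (fun s => ∀ u, s u = s 0) with hC
  set T : Option (ZMod p) → Finset (ZMod p × ZMod p → A) :=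
    fun m => univ.filter (fun s => ∀ u, s u = s (u + gen m)) with hT
  have hNcard : Nat.card {s : ZMod p × ZMod p → A //
      ∃ v : ZMod p × ZMod p, v ≠ 0 ∧ ∀ u, s u = s (u + v)} = S.card := by
    rw [Nat.card_eq_fintype_card, Fintype.card_subtype]
  have hCsub : ∀ m, C ⊆ T m := by
    intro m s hs
    rw [hC, mem_filter] at hs
    rw [hT, mem_filter]
    exact ⟨mem_univ _, fun u => by rw [hs.2 u, hs.2 (u + gen m)]⟩
  have hTcard : ∀ m, (T m).card = X ^ p := by
    intro m
    rw [hT]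
    rw [← Fintype.card_subtype, ← Nat.card_eq_fintype_card]
    exact card_T m
  have hCcard : C.card = X := by
    rw [hC, ← Fintype.card_subtype, ← Nat.card_eq_fintype_card]
    exact card_C
  -- the union decomposition
  have hdecomp : S = C ∪ univ.biUnion (fun m => T m \ C) := by
    ext s
    constructor
    · intro hs
      rw [hS, mem_filter] at hs
      obtain ⟨-, v, hv, hinv⟩ := hs
      by_cases hc : s ∈ C
      · exact mem_union_left _ hc
      · obtain ⟨m, hm⟩ := exists_gen hv hinv
        refine mem_union_right _ (mem_biUnion.mpr ⟨m, mem_univ _, mem_sdiff.mpr ⟨?_, hc⟩⟩)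
        rw [hT, mem_filter]
        exact ⟨mem_univ _, hm⟩
    · intro hs
      rw [hS, mem_filter]
      refine ⟨mem_univ _, ?_⟩
      rcases mem_union.mp hs with hc | hm
      · rw [hC, mem_filter] at hc
        exact ⟨gen none, gen_ne_zero none, fun u => by rw [hc.2 u, hc.2 (u + gen none)]⟩
      · obtain ⟨m, -, hm⟩ := mem_biUnion.mp hm
        have hTm := (mem_sdiff.mp hm).1
        rw [hT, mem_filter] at hTm
        exact ⟨gen m, gen_ne_zero m, hTm.2⟩
  have hdisj : Disjoint C (univ.biUnion (fun m => T m \ C)) := by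
    rw [Finset.disjoint_left]
    intro s hs hmem
    rw [mem_biUnion] at hmem
    obtain ⟨m, -, hm⟩ := hmem
    exact (mem_sdiff.mp hm).2 hs
  have hpair : ∀ m ∈ (univ : Finset (Option (ZMod p))), ∀ m' ∈ univ, m ≠ m' →
      Disjoint (T m \ C) (T m' \ C) := by
    rintro m - m' - hmm
    rw [Finset.disjoint_left]
    intro s hs hs'
    rw [mem_sdiff] at hs hs'
    have h1 := (mem_filter.mp hs.1).2
    have h2 := (mem_filter.mp hs'.1).2
    have : s ∈ C := by
      rw [hC, mem_filter]
      exact ⟨mem_univ _, const_of_two hmm h1 h2⟩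
    exact hs.2 this
  rw [hNcard, hdecomp, Finset.card_union_of_disjoint hdisj, Finset.card_biUnion hpair]
  have hsd : ∀ m, (T m \ C).card = X ^ p - X := by
    intro m
    rw [Finset.card_sdiff_of_subset (hCsub m), hTcard m, hCcard]
  rw [Finset.sum_congr rfl (fun m _ => hsd m), Finset.sum_const, hCcard]
  rw [Finset.card_univ, Fintype.card_option, ZMod.card]
  -- arithmetic
  have hXle : X ≤ X ^ p := Nat.le_self_pow hp.ne_zero X
  have h2 : X * p ≤ X ^ p * (p + 1) := Nat.mul_le_mul hXle (Nat.le_succ p)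
  rw [smul_eq_mul]
  zify [hXle, h2]
  ring
end

section
/- For any n ≥ 2 and finite alphabet Σ with |Σ| ≥ 2, the number |S_{n×n}| of configurations on Z_n × Z_n shift-symmetric with respect to at least one non-zero vector satisfies |Σ|^n·(n+1) − |Σ|·n ≤ |S_{n×n}|, with equality if and only if n is prime. -/
/-!
A configuration with a nonzero period `v` is invariant under the whole subgroup generated by `v`.
For `p` prime that subgroup is one of the `p + 1` lines through the origin of `(ZMod p)²`, and a
configuration invariant under a line `L` is a pullback of an arbitrary profile `ZMod p → A` along a
projection with kernel `L`. A configuration invariant under two distinct lines is constant, so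
`S_{p×p}` is the disjoint union of the `|A|` constants and `p + 1` copies of the nonconstant profiles:
`|A| + (p + 1)(|A|^p - |A|)` configurations.

For composite `n` with a divisor `1 < m < n`, every configuration of `ZMod m × ZMod n` pulls back to one
with period `(m, 0)`, which already gives `|A|^(m n) ≥ |A|^(2 n)` configurations, more than the bound.
-/

open Function

variable {G H A : Type*}

/-- The set `S_{n×n}` of configurations with a nonzero period. -/
abbrev ShiftSymmetric (n : ℕ) (A : Type*) : Type _ :=
  {s : ZMod n × ZMod n → A // ∃ v : ZMod n × ZMod n, v ≠ 0 ∧ ∀ u, s u = s (u + v)}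

theorem Function.periodic_comp_of_map_eq_zero [AddZeroClass G] [AddZeroClass H] (π : G →+ H)
    {v : G} (hv : π v = 0) (f : H → A) : Periodic (f ∘ π) v := fun u => by
  simp [hv]

theorem Function.Periodic.of_comp {F : Type*} [Add G] [Add H] [FunLike F G H] [AddHomClass F G H]
    {π : F} (hπ : Surjective π) {f : H → A} {v : G} (h : Periodic (f ∘ π) v) :
    Periodic f (π v) := by
  intro x
  obtain ⟨u, rfl⟩ := hπ x
  simpa [map_add] using h u

theorem Function.Periodic.zmod_smul {n : ℕ} [NeZero n] [AddCommGroup G] [Module (ZMod n) G]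
    {s : G → A} {v : G} (h : Periodic s v) (c : ZMod n) : Periodic s (c • v) := by
  rw [← ZMod.natCast_zmod_val c, Nat.cast_smul_eq_nsmul]
  exact h.nsmul _

theorem Function.Periodic.eq_const_of_ne_zero {p : ℕ} [Fact p.Prime] {f : ZMod p → A}
    {t : ZMod p} (h : Periodic f t) (ht : t ≠ 0) : f = const _ (f 0) := by
  funext x
  simpa [inv_mul_cancel_right₀ ht] using h.zmod_smul (x * t⁻¹) 0

section Lines

variable {K : Type*} [Field K]

/-! The lines through the origin of `K²` are indexed by `Option K`: `lineDir i` spans the line,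
which is the kernel of `lineProj i`, and `lineSection i` is a right inverse of `lineProj i`. -/

def lineDir : Option K → K × K
  | none => (1, 0)
  | some i => (i, 1)

def lineProj : Option K → K × K →ₗ[K] K
  | none => LinearMap.snd K K K
  | some i => LinearMap.fst K K K - i • LinearMap.snd K K K

def lineSection : Option K → K → K × K
  | none, x => (0, x)
  | some _, x => (x, 0)

theorem lineDir_ne_zero (i : Option K) : lineDir i ≠ 0 := by
  cases i <;> simp [lineDir]

theorem lineProj_lineDir (i : Option K) : lineProj i (lineDir i) = 0 := by
  cases i <;> simp [lineProj, lineDir]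

theorem lineProj_lineSection (i : Option K) (x : K) : lineProj i (lineSection i x) = x := by
  cases i <;> simp [lineProj, lineSection]

theorem lineProj_surjective (i : Option K) : Surjective (lineProj i) :=
  fun x => ⟨_, lineProj_lineSection i x⟩

theorem lineProj_lineDir_ne_zero {i j : Option K} (hij : i ≠ j) : lineProj i (lineDir j) ≠ 0 := by
  cases i <;> cases j <;> simp_all [lineProj, lineDir, sub_eq_zero, eq_comm]

theorem exists_smul_eq_lineDir {v : K × K} (hv : v ≠ 0) : ∃ i, ∃ c : K, c • v = lineDir i := by
  obtain ⟨a, b⟩ := v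
  by_cases hb : b = 0
  · subst hb
    have ha : a ≠ 0 := by simpa using hv
    exact ⟨none, a⁻¹, by simp [lineDir, ha]⟩
  · exact ⟨some (a / b), b⁻¹, by simp [lineDir, hb, div_eq_inv_mul]⟩

theorem exists_lineSection_add_smul_lineDir (i : Option K) (u : K × K) :
    ∃ c : K, lineSection i (lineProj i u) + c • lineDir i = u := by
  cases i with
  | none => exact ⟨u.1, by simp [lineSection, lineProj, lineDir]⟩
  | some i => exact ⟨u.2, by ext <;> simp [lineSection, lineProj, lineDir]; ring⟩

end Lines

section Prime

variable {p : ℕ} [Fact p.Prime]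

theorem Function.Periodic.eq_comp_lineProj {s : ZMod p × ZMod p → A} {i : Option (ZMod p)}
    (h : Periodic s (lineDir i)) : s = (s ∘ lineSection i) ∘ lineProj i := by
  funext u
  obtain ⟨c, hc⟩ := exists_lineSection_add_smul_lineDir i u
  conv_lhs => rw [← hc]
  exact h.zmod_smul c _

theorem comp_lineProj_ne_comp_lineProj {i j : Option (ZMod p)} (hij : i ≠ j) {f g : ZMod p → A}
    (hf : f ∉ Set.range (const (ZMod p))) : f ∘ lineProj i ≠ g ∘ lineProj j := by
  intro heq
  have hj : Periodic (f ∘ lineProj i) (lineDir j) :=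
    heq ▸ periodic_comp_of_map_eq_zero (lineProj j).toAddMonoidHom (lineProj_lineDir j) g
  exact hf ⟨f 0, ((hj.of_comp (lineProj_surjective i)).eq_const_of_ne_zero
    (lineProj_lineDir_ne_zero hij)).symm⟩

variable (A p) in
def shiftSymmetricOfProfile :
    A ⊕ Option (ZMod p) × ↥(Set.range (const (ZMod p) : A → ZMod p → A))ᶜ → ShiftSymmetric p A
  | .inl a => ⟨const _ a, lineDir none, lineDir_ne_zero none, fun _ => rfl⟩
  | .inr (i, f) => ⟨f.1 ∘ lineProj i, lineDir i, lineDir_ne_zero i, fun u =>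
      (periodic_comp_of_map_eq_zero (lineProj i).toAddMonoidHom (lineProj_lineDir i) f.1 u).symm⟩

theorem shiftSymmetricOfProfile_injective : Injective (shiftSymmetricOfProfile A p) := by
  have hconst (i) (a : A) (f : ↥(Set.range (const (ZMod p) : A → ZMod p → A))ᶜ) :
      const _ a ≠ f.1 ∘ lineProj i := fun h =>
    f.2 ⟨a, ((lineProj_surjective i).injective_comp_right (a₁ := const _ a) h)⟩
  rintro (a | ⟨i, f⟩) (b | ⟨j, g⟩) h <;> replace h := congrArg Subtype.val h
  · exact congrArg _ (const_injective h)
  · exact absurd h (hconst j a g)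
  · exact absurd h.symm (hconst i b f)
  · obtain rfl | hij := eq_or_ne i j
    · rw [Subtype.ext ((lineProj_surjective i).injective_comp_right h)]
    · exact absurd h (comp_lineProj_ne_comp_lineProj hij f.2)

theorem shiftSymmetricOfProfile_surjective : Surjective (shiftSymmetricOfProfile A p) := by
  rintro ⟨s, v, hv, hs⟩
  by_cases hconst : s ∈ Set.range (const _)
  · obtain ⟨a, rfl⟩ := hconst
    exact ⟨.inl a, rfl⟩
  obtain ⟨i, c, hc⟩ := exists_smul_eq_lineDir hv
  have hper : Periodic s (lineDir i) := hc ▸ Periodic.zmod_smul (fun u => (hs u).symm) c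
  have hprofile : s ∘ lineSection i ∉ Set.range (const _) := by
    rintro ⟨a, ha⟩
    exact hconst ⟨a, by rw [hper.eq_comp_lineProj, ← ha]; rfl⟩
  exact ⟨.inr (i, ⟨_, hprofile⟩), Subtype.ext hper.eq_comp_lineProj.symm⟩

theorem Nat.add_succ_mul_tsub {a b : ℕ} (k : ℕ) (h : a ≤ b) :
    a + (k + 1) * (b - a) = b * (k + 1) - a * k := by
  obtain ⟨d, rfl⟩ := Nat.exists_eq_add_of_le h
  rw [Nat.add_sub_cancel_left, show (a + d) * (k + 1) = a * k + (a + (k + 1) * d) by ring,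
    Nat.add_sub_cancel_left]

variable (p) in
theorem card_shiftSymmetric_of_prime (A : Type*) [Fintype A] :
    Nat.card (ShiftSymmetric p A) = Fintype.card A ^ p * (p + 1) - Fintype.card A * p := by
  classical
  rw [← Nat.card_congr (Equiv.ofBijective _ ⟨shiftSymmetricOfProfile_injective (A := A) (p := p),
      shiftSymmetricOfProfile_surjective⟩), Nat.card_eq_fintype_card, Fintype.card_sum,
    Fintype.card_prod, Fintype.card_option, Fintype.card_compl_set,
    Set.card_range_of_injective const_injective, Fintype.card_fun, ZMod.card]
  exact Nat.add_succ_mul_tsub p (Nat.le_self_pow (Fact.out : p.Prime).ne_zero _)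

end Prime

theorem pow_le_card_shiftSymmetric {m n : ℕ} (hmn : m ∣ n) (hm : m < n) (A : Type*) [Fintype A] :
    Fintype.card A ^ (m * n) ≤ Nat.card (ShiftSymmetric n A) := by
  have : NeZero n := ⟨by omega⟩
  have : NeZero m := ⟨(Nat.pos_of_dvd_of_pos hmn (by omega)).ne'⟩
  let π := (ZMod.castHom hmn (ZMod m)).toAddMonoidHom.prodMap (AddMonoidHom.id (ZMod n))
  have hπ : Surjective π := Prod.map_surjective.mpr ⟨ZMod.castHom_surjective hmn, surjective_id⟩
  have hv : ((m : ZMod n), (0 : ZMod n)) ≠ 0 := by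
    simpa [ZMod.natCast_eq_zero_iff] using Nat.not_dvd_of_pos_of_lt (NeZero.pos m) hm
  have hπv : π ((m : ZMod n), 0) = 0 := by simp [π]
  let pullback (f : ZMod m × ZMod n → A) : ShiftSymmetric n A :=
    ⟨f ∘ π, _, hv, fun u => (periodic_comp_of_map_eq_zero π hπv f u).symm⟩
  have hpullback : Injective pullback := fun f g h =>
    hπ.injective_comp_right (congrArg Subtype.val h)
  simpa [Nat.card_fun, Nat.card_prod] using Nat.card_le_card_of_injective pullback hpullback

theorem lt_card_shiftSymmetric_of_not_prime {n : ℕ} (hn : 2 ≤ n) (hnp : ¬ n.Prime) (A : Type*)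
    [Fintype A] (hA : 2 ≤ Fintype.card A) :
    Fintype.card A ^ n * (n + 1) - Fintype.card A * n < Nat.card (ShiftSymmetric n A) := by
  obtain ⟨m, hmn, hm, hmlt⟩ := Nat.exists_dvd_of_not_prime2 hn hnp
  set k := Fintype.card A
  calc k ^ n * (n + 1) - k * n < k ^ n * (n + 1) := Nat.sub_lt (by positivity) (by positivity)
    _ ≤ k ^ n * k ^ n :=
        Nat.mul_le_mul_left _ (Nat.lt_two_pow_self.trans_le (Nat.pow_le_pow_left hA n))
    _ = k ^ (2 * n) := by rw [two_mul, pow_add]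
    _ ≤ k ^ (m * n) := Nat.pow_le_pow_right (by omega) (Nat.mul_le_mul_right n hm)
    _ ≤ Nat.card (ShiftSymmetric n A) := pow_le_card_shiftSymmetric hmn hmlt A

theorem stmt_18 (n : ℕ) (hn : 2 ≤ n) (A : Type) [Fintype A] (hA : 2 ≤ Fintype.card A) :
    Fintype.card A ^ n * (n + 1) - Fintype.card A * n ≤
      Nat.card {s : ZMod n × ZMod n → A //
        ∃ v : ZMod n × ZMod n, v ≠ 0 ∧ ∀ u, s u = s (u + v)} ∧
    (Fintype.card A ^ n * (n + 1) - Fintype.card A * n =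
        Nat.card {s : ZMod n × ZMod n → A //
          ∃ v : ZMod n × ZMod n, v ≠ 0 ∧ ∀ u, s u = s (u + v)} ↔ n.Prime) := by
  by_cases hp : n.Prime
  · have : Fact n.Prime := ⟨hp⟩
    have h := card_shiftSymmetric_of_prime n A
    exact ⟨h.ge, fun _ => hp, fun _ => h.symm⟩
  · have h := lt_card_shiftSymmetric_of_not_prime hn hp A hA
    exact ⟨h.le, fun h' => absurd h' h.ne, fun hp' => absurd hp' hp⟩
end

section
/- For any non-zero v ∈ Z_n × Z_n, state a ∈ Σ, and k ∈ ℕ such that |⟨v⟩| divides k and k ≤ n², the number of configurations s : Z_n × Z_n → Σ that are shift-symmetric w.r.t. v and have exactly k cells in state a equals C(n²/|⟨v⟩|, k/|⟨v⟩|)·(|Σ|−1)^((n²−k)/|⟨v⟩|). -/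
/-!
A configuration that is periodic under `v` is the same thing as a function on the quotient
`(ZMod n × ZMod n) ⧸ ⟨v⟩`, and each cell of the quotient is a coset of `|⟨v⟩|` cells of the torus.
So such a configuration has `k` cells in state `a` exactly when its quotient function has
`k / |⟨v⟩|` of them; these are counted by choosing that many cells of the quotient and giving every
other cell one of the `|Σ| - 1` remaining states.
-/

open Finset Function Fintype

theorem card_filter_fiber_eq {Q A : Type*} [Fintype Q] [DecidableEq Q] [Fintype A] [DecidableEq A]
    (a : A) (S : Finset Q) :
    #{f : Q → A | univ.filter (f · = a) = S} = (Fintype.card A - 1) ^ (Fintype.card Q - #S) := by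
  have hpi : ({f : Q → A | univ.filter (f · = a) = S} : Finset (Q → A)) =
      piFinset fun q => if q ∈ S then {a} else {a}ᶜ := by
    ext f
    simp only [mem_filter, mem_univ, true_and, mem_piFinset, Finset.ext_iff]
    refine forall_congr' fun q => ?_
    split_ifs with h <;> simp [h]
  rw [hpi]
  calc #(piFinset fun q => if q ∈ S then {a} else {a}ᶜ)
      = ∏ q, if q ∈ Sᶜ then Fintype.card A - 1 else 1 := by
        rw [card_piFinset]
        refine prod_congr rfl fun q _ => ?_
        by_cases hq : q ∈ S <;> simp [hq, card_compl]
    _ = (Fintype.card A - 1) ^ (Fintype.card Q - #S) := by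
        rw [Fintype.prod_ite_mem, prod_const, card_compl]

theorem card_fun_card_fiber_eq {Q A : Type*} [Finite Q] [Fintype A] (a : A) (j : ℕ) :
    Nat.card {f : Q → A // Nat.card {q // f q = a} = j} =
      (Nat.card Q).choose j * (Fintype.card A - 1) ^ (Nat.card Q - j) := by
  classical
  have := Fintype.ofFinite Q
  have hfiber (f : Q → A) : Nat.card {q // f q = a} = #{q | f q = a} := by
    rw [Nat.card_eq_fintype_card, Fintype.card_subtype]
  rw [Nat.card_eq_fintype_card, Fintype.card_subtype, Nat.card_eq_fintype_card]
  simp only [hfiber]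
  rw [card_eq_sum_card_fiberwise (f := fun f : Q → A => ({q | f q = a} : Finset Q))
    (t := powersetCard j univ) fun f hf => by simpa using hf,
    sum_congr rfl (g := fun _ => (Fintype.card A - 1) ^ (Fintype.card Q - j)), sum_const,
    card_powersetCard, card_univ, smul_eq_mul]
  intro S hS
  rw [mem_powersetCard] at hS
  rw [filter_filter, ← hS.2, ← card_filter_fiber_eq a S]
  congr 1
  exact filter_congr fun f _ => ⟨And.right, fun h => ⟨by rw [h], h⟩⟩

section Quotient

variable {G A : Type*} [AddGroup G]

def Function.Periodic.quotientFunEquiv (c : G) :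
    (G ⧸ AddSubgroup.zmultiples c → A) ≃ {s : G → A // Periodic s c} where
  toFun f := ⟨fun x => f x, fun x => congrArg f <| QuotientAddGroup.eq.mpr (by simp)⟩
  invFun s := s.2.lift
  left_inv f := funext fun q => QuotientAddGroup.induction_on q fun _ => rfl
  right_inv _ := rfl

theorem QuotientAddGroup.card_fiber_comp_mk (H : AddSubgroup G) (f : G ⧸ H → A) (a : A) :
    Nat.card {x : G // f x = a} = Nat.card H * Nat.card {q // f q = a} :=
  (Nat.card_congr (QuotientAddGroup.preimageMkEquivAddSubgroupProdSet H {q | f q = a})).trans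
    (Nat.card_prod _ _)

theorem card_periodic_fun_card_fiber_eq [Finite G] [Fintype A] (c : G) (a : A) (j : ℕ) :
    Nat.card {s : G → A // Periodic s c ∧
        Nat.card {x // s x = a} = Nat.card (AddSubgroup.zmultiples c) * j} =
      (Nat.card (G ⧸ AddSubgroup.zmultiples c)).choose j *
        (Fintype.card A - 1) ^ (Nat.card (G ⧸ AddSubgroup.zmultiples c) - j) := by
  have hpos : 0 < Nat.card (AddSubgroup.zmultiples c) := Nat.card_pos
  rw [← card_fun_card_fiber_eq a j]
  refine (Nat.card_congr <| ((Periodic.quotientFunEquiv c).subtypeEquiv fun f => ?_).trans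
    (Equiv.subtypeSubtypeEquivSubtypeInter _ _)).symm
  change _ ↔ Nat.card {x : G // f x = a} = _
  rw [QuotientAddGroup.card_fiber_comp_mk, Nat.mul_left_cancel_iff hpos]

end Quotient

theorem stmt_19_general (n : ℕ) (hn : 1 ≤ n) (A : Type) [Fintype A] (a : A)
    (v : ZMod n × ZMod n) (k : ℕ)
    (hdvd : Nat.card (AddSubgroup.zmultiples v) ∣ k) :
    Nat.card {s : ZMod n × ZMod n → A //
        (∀ u, s u = s (u + v)) ∧ Nat.card {u : ZMod n × ZMod n // s u = a} = k} =
      Nat.choose (n ^ 2 / Nat.card (AddSubgroup.zmultiples v))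
          (k / Nat.card (AddSubgroup.zmultiples v)) *
        (Fintype.card A - 1) ^ ((n ^ 2 - k) / Nat.card (AddSubgroup.zmultiples v)) := by
  have : NeZero n := ⟨by omega⟩
  set m := Nat.card (AddSubgroup.zmultiples v)
  have hpos : 0 < m := Nat.card_pos
  obtain ⟨j, rfl⟩ := hdvd
  have hcard : n ^ 2 = m * Nat.card ((ZMod n × ZMod n) ⧸ AddSubgroup.zmultiples v) := by
    rw [mul_comm, ← AddSubgroup.card_eq_card_quotient_mul_card_addSubgroup, Nat.card_prod,
      Nat.card_zmod, sq]
  have hperiodic (s : ZMod n × ZMod n → A) : (∀ u, s u = s (u + v)) ↔ Periodic s v :=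
    forall_congr' fun _ => eq_comm
  simp only [hperiodic]
  rw [card_periodic_fun_card_fiber_eq, hcard, ← Nat.mul_sub, Nat.mul_div_cancel_left _ hpos,
    Nat.mul_div_cancel_left _ hpos, Nat.mul_div_cancel_left _ hpos]

theorem stmt_19 (n : ℕ) (hn : 1 ≤ n) (A : Type) [Fintype A] (a : A)
    (v : ZMod n × ZMod n) (hv : v ≠ 0) (k : ℕ)
    (hdvd : Nat.card (AddSubgroup.zmultiples v) ∣ k) (hk : k ≤ n ^ 2) :
    Nat.card {s : ZMod n × ZMod n → A //
        (∀ u, s u = s (u + v)) ∧ Nat.card {u : ZMod n × ZMod n // s u = a} = k} =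
      Nat.choose (n ^ 2 / Nat.card (AddSubgroup.zmultiples v))
          (k / Nat.card (AddSubgroup.zmultiples v)) *
        (Fintype.card A - 1) ^ ((n ^ 2 - k) / Nat.card (AddSubgroup.zmultiples v)) :=
  stmt_19_general n hn A a v k hdvd
end
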